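/- arXiv:1009.4812 — 2 statements merged into one kernel-verified Lean document; each statement's English description precedes it below -/
import Mathlib

section
/- Let ε = (E_1,…,E_n) be an exceptional sequence in a hereditary Hom-finite abelian category H over an algebraically closed field, and suppose a < b are indices such that there exists a nonzero monomorphism f : E_a → E_b, while Hom(E_i, E_j) = 0 for all other pairs a ≤ i < j ≤ b. Then Ext^1(E_a, E_i) = 0 and Hom(E_a, E_i) = 0 for all a < i < b. -/
/-! The short exact sequence `0 → E_a → E_b → coker f → 0` gives the exact piece
`Ext¹(E_b, X) → Ext¹(E_a, X) → Ext²(coker f, X) = 0` of the contravariant long exact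
sequence, so `Ext¹(E_a, E_i)` is a quotient of `Ext¹(E_b, E_i) = 0` for `a < i < b`. -/

open CategoryTheory Limits

attribute [local instance] CategoryTheory.Abelian.hasFiniteBiproducts

universe w v u

variable (K : Type u) [Field K] [IsAlgClosed K]
variable (C : Type u) [Category.{v} C] [Abelian C] [Linear K C] [HasExt.{w} C]

/-- An object of an abelian category is indecomposable if it is nonzero and has
no nontrivial biproduct decomposition. -/
def IsIndec (X : C) : Prop :=
  ¬ Limits.IsZero X ∧ ∀ Y Z : C, Nonempty (X ≅ Y ⊞ Z) → Limits.IsZero Y ∨ Limits.IsZero Z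

namespace CategoryTheory.Abelian.Ext

variable {C}

lemma precomp_mk₀_surjective_of_mono {A B : C} (f : A ⟶ B) [Mono f] (X : C) (n : ℕ)
    [Subsingleton (Ext (cokernel f) X (n + 1))] :
    Function.Surjective ((mk₀ f).precomp X (zero_add n)) := by
  have hS : (ShortComplex.mk f (cokernel.π f) (cokernel.condition f)).ShortExact :=
    { exact := ShortComplex.exact_cokernel f }
  intro x
  exact contravariant_sequence_exact₁ hS X x (add_comm 1 n) (Subsingleton.elim _ _)

lemma subsingleton_of_mono {A B : C} (f : A ⟶ B) [Mono f] (X : C) (n : ℕ)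
    [Subsingleton (Ext B X n)] [Subsingleton (Ext (cokernel f) X (n + 1))] :
    Subsingleton (Ext A X n) :=
  (precomp_mk₀_surjective_of_mono f X n).subsingleton

end CategoryTheory.Abelian.Ext

theorem transposition_lemma_mono
    -- hereditary: `Ext²` vanishes
    (hHered : ∀ X Y : C, Subsingleton (Abelian.Ext X Y 2))
    (n : ℕ) (E : Fin n → C)
    (hSeq : ∀ i j : Fin n, j < i →
      (∀ f : E i ⟶ E j, f = 0) ∧ Subsingleton (Abelian.Ext (E i) (E j) 1))
    (a b : Fin n)
    (f : E a ⟶ E b) (hmono : Mono f)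
    (hvan : ∀ i j : Fin n, a ≤ i → i < j → j ≤ b → ¬(i = a ∧ j = b) →
      ∀ g : E i ⟶ E j, g = 0) :
    ∀ i : Fin n, a < i → i < b →
      Subsingleton (Abelian.Ext (E a) (E i) 1) ∧ (∀ g : E a ⟶ E i, g = 0) := by
  intro i hai hib
  have := (hSeq b i hib).2
  have := hHered (cokernel f) (E i)
  exact ⟨Abelian.Ext.subsingleton_of_mono f (E i) 1,
    hvan a i le_rfl hai hib.le fun h => hib.ne h.2⟩
end

section
/- Let ε = (E_1,…,E_n) be an exceptional sequence in a hereditary Hom-finite abelian category H over an algebraically closed field, and suppose a < b are indices such that there exists a nonzero epimorphism f : E_a → E_b, while Hom(E_i, E_j) = 0 for all other pairs a ≤ i < j ≤ b. Then Hom(E_i, E_b) = 0 and Ext^1(E_i, E_b) = 0 for all a < i < b. -/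
open CategoryTheory Limits

attribute [local instance] CategoryTheory.Abelian.hasFiniteBiproducts

universe w v u

variable (K : Type u) [Field K] [IsAlgClosed K]
variable (C : Type u) [Category.{v} C] [Abelian C] [Linear K C] [HasExt.{w} C]

/-!
Ringel's transposition lemma, part (b): if `(E_1,…,E_n)` is an exceptional
sequence, `a < b`, there is a nonzero epimorphism `f : E_a → E_b`, and
`Hom(E_i,E_j) = 0` for all other pairs `a ≤ i < j ≤ b`, then
`Hom(E_i,E_b) = 0` and `Ext¹(E_i,E_b) = 0` for all `a < i < b`.
-/

theorem transposition_lemma_epi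
    (homFin : ∀ X Y : C, FiniteDimensional K (X ⟶ Y))
    -- hereditary: `Ext²` vanishes
    (hHered : ∀ X Y : C, Subsingleton (Abelian.Ext X Y 2))
    (n : ℕ) (E : Fin n → C)
    (hExcObj : ∀ i, IsIndec C (E i) ∧ Subsingleton (Abelian.Ext (E i) (E i) 1))
    (hSeq : ∀ i j : Fin n, j < i →
      (∀ f : E i ⟶ E j, f = 0) ∧ Subsingleton (Abelian.Ext (E i) (E j) 1))
    (a b : Fin n) (hab : a < b)
    (f : E a ⟶ E b) (hf : f ≠ 0) (hepi : Epi f)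
    (hvan : ∀ i j : Fin n, a ≤ i → i < j → j ≤ b → ¬(i = a ∧ j = b) →
      ∀ g : E i ⟶ E j, g = 0) :
    ∀ i : Fin n, a < i → i < b →
      (∀ g : E i ⟶ E b, g = 0) ∧ Subsingleton (Abelian.Ext (E i) (E b) 1) := by
  intro i hai hib
  constructor
  · intro g
    exact hvan i b hai.le hib le_rfl (fun h => (ne_of_lt hai).symm h.1) g
  · -- short exact sequence 0 → ker f → E a → E b → 0
    set S : ShortComplex C := ShortComplex.mk (kernel.ι f) f (kernel.condition f) with hSdef
    have hS : S.ShortExact := by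
      refine ⟨S.exact_of_f_is_kernel (kernelIsKernel f)⟩
    have key : ∀ x : Abelian.Ext (E i) (E b) 1, x = 0 := by
      intro x
      have h2 : x.comp hS.extClass (by norm_num) = (0 : Abelian.Ext (E i) (kernel f) 2) :=
        (hHered _ _).elim _ _
      obtain ⟨x₂, hx₂⟩ := Abelian.Ext.covariant_sequence_exact₃ (E i) hS x rfl h2
      have hx₂0 : x₂ = 0 := (hSeq i a hai).2.elim _ _
      rw [← hx₂, hx₂0, Abelian.Ext.zero_comp]
    exact ⟨fun x y => by rw [key x, key y]⟩
end
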